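/- arXiv:2602.16924 — 2 statements merged into one kernel-verified Lean document; each statement's English description precedes it below -/
import Mathlib

section
/- Let $A: \mathcal{X} \to GL_d(\mathbb{R})$ be a smooth matrix field on an open set $\mathcal{X} \subseteq \mathbb{R}^d$ such that each row of $A^{-\top}$ is a gradient, i.e. $(A^{-1})_{ij} = \partial_i \phi_j$ for smooth functions $\phi_1, \dots, \phi_d$. Define $v(q,p) = A(q)p$. Then for every $(q,p)$, the matrix $A(q)^{-1} \nabla_q v(q,p)$ is symmetric; explicitly, $(A^{-1}\nabla_q v)_{ij} = -\sum_{\gamma} \partial^2_{ji}\phi_\gamma \, v_\gamma$. -/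
open Matrix
/-- If `A` is a smooth invertible matrix field on an open set `X` such that the rows of
`A⁻ᵀ` are gradients, `(A⁻¹)ᵢⱼ = ∂ᵢ φⱼ`, and `v(q,p) = A(q) p`, then the matrix
`A(q)⁻¹ ∇_q v(q,p)` is symmetric, explicitly `(A⁻¹ ∇_q v)ᵢⱼ = -∑_γ ∂²ⱼᵢ φ_γ v_γ`. -/
theorem inv_mul_jacobian_symm {d : ℕ} (X : Set (Fin d → ℝ)) (hX : IsOpen X)
    (A : (Fin d → ℝ) → Matrix (Fin d) (Fin d) ℝ)
    (hAsmooth : ∀ i j : Fin d, ContDiffOn ℝ (⊤ : ℕ∞) (fun q => A q i j) X)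
    (hAinv : ∀ q ∈ X, IsUnit (A q))
    (φ : Fin d → (Fin d → ℝ) → ℝ)
    (hφ : ∀ j, ContDiffOn ℝ (⊤ : ℕ∞) (φ j) X)
    (hgrad : ∀ q ∈ X, ∀ i j : Fin d,
      (A q)⁻¹ i j = fderiv ℝ (φ j) q (Pi.single i 1)) :
    ∀ q ∈ X, ∀ p : Fin d → ℝ, ∀ i j : Fin d,
      (∑ α, (A q)⁻¹ i α *
          fderiv ℝ (fun q' => (A q' *ᵥ p) α) q (Pi.single j 1))
        = -(∑ γ, fderiv ℝ (fun q' => fderiv ℝ (φ γ) q' (Pi.single i 1)) q (Pi.single j 1)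
            * (A q *ᵥ p) γ)
      ∧ (∑ α, (A q)⁻¹ i α *
            fderiv ℝ (fun q' => (A q' *ᵥ p) α) q (Pi.single j 1))
        = (∑ α, (A q)⁻¹ j α *
            fderiv ℝ (fun q' => (A q' *ᵥ p) α) q (Pi.single i 1)) := by
  intro q hq p i j
  have hmem : X ∈ nhds q := hX.mem_nhds hq
  set e : Fin d → (Fin d → ℝ) := fun k => Pi.single k 1 with he
  -- differentiability of matrix entries on X
  have hAdiff : ∀ q' ∈ X, ∀ α β, DifferentiableAt ℝ (fun q'' => A q'' α β) q' := by
    intro q' hq' α β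
    exact ((hAsmooth α β).contDiffAt (hX.mem_nhds hq')).differentiableAt (by simp)
  -- smoothness of directional derivative of φ
  have hψcd : ∀ (γ : Fin d) (k : Fin d),
      ContDiffAt ℝ (⊤ : ℕ∞) (fun q' => fderiv ℝ (φ γ) q' (e k)) q := by
    intro γ k
    have h1 : ContDiffAt ℝ (⊤ : ℕ∞) (φ γ) q := (hφ γ).contDiffAt hmem
    have h2 : ContDiffAt ℝ (⊤ : ℕ∞) (fderiv ℝ (φ γ)) q := h1.fderiv_right (by simp)
    exact h2.clm_apply contDiffAt_const
  have hψdiff : ∀ q' ∈ X, ∀ (γ : Fin d) (k : Fin d),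
      DifferentiableAt ℝ (fun q'' => fderiv ℝ (φ γ) q'' (e k)) q' := by
    intro q' hq' γ k
    have h1 : ContDiffAt ℝ (⊤ : ℕ∞) (φ γ) q' := (hφ γ).contDiffAt (hX.mem_nhds hq')
    have h2 : ContDiffAt ℝ (⊤ : ℕ∞) (fderiv ℝ (φ γ)) q' := h1.fderiv_right (by simp)
    exact (h2.clm_apply contDiffAt_const).differentiableAt (by simp)
  -- step A: derivative of (A q' *ᵥ p) α
  have hv : ∀ (α : Fin d) (dir : Fin d → ℝ),
      fderiv ℝ (fun q' => (A q' *ᵥ p) α) q dir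
        = ∑ β, fderiv ℝ (fun q' => A q' α β) q dir * p β := by
    intro α dir
    have hfun : (fun q' => (A q' *ᵥ p) α) = fun q' => ∑ β, A q' α β * p β := by
      funext q'; simp [Matrix.mulVec, dotProduct]
    rw [hfun, fderiv_fun_sum (fun β _ => (hAdiff q hq α β).mul_const (p β))]
    rw [ContinuousLinearMap.sum_apply]
    refine Finset.sum_congr rfl fun β _ => ?_
    rw [fderiv_mul_const (hAdiff q hq α β)]
    simp [mul_comm]
  -- second derivative symmetry
  have hsymm : ∀ (γ : Fin d) (u w : Fin d → ℝ),
      fderiv ℝ (fun q' => fderiv ℝ (φ γ) q' u) q w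
        = fderiv ℝ (fun q' => fderiv ℝ (φ γ) q' w) q u := by
    intro γ u w
    have hcd : ContDiffAt ℝ (⊤ : ℕ∞) (φ γ) q := (hφ γ).contDiffAt hmem
    have hd2 : DifferentiableAt ℝ (fderiv ℝ (φ γ)) q :=
      (hcd.fderiv_right (m := 1) (by exact WithTop.coe_le_coe.mpr le_top)).differentiableAt one_ne_zero
    have hs : IsSymmSndFDerivAt ℝ (φ γ) q := hcd.isSymmSndFDerivAt (by rw [minSmoothness_of_isRCLikeNormedField]; exact WithTop.coe_le_coe.mpr le_top)
    have key : ∀ z : Fin d → ℝ, fderiv ℝ (fun q' => fderiv ℝ (φ γ) q' z) q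
        = (fderiv ℝ (fderiv ℝ (φ γ)) q).flip z := by
      intro z
      rw [fderiv_clm_apply hd2 (differentiableAt_const z)]
      simp
    rw [key u, key w]
    simpa using hs w u
  -- main computation
  have main : ∀ i' j' : Fin d,
      (∑ α, (A q)⁻¹ i' α * fderiv ℝ (fun q' => (A q' *ᵥ p) α) q (e j'))
        = -(∑ γ, fderiv ℝ (fun q' => fderiv ℝ (φ γ) q' (e i')) q (e j') * (A q *ᵥ p) γ) := by
    intro i' j'
    have hkey' : ∀ β : Fin d,
        (∑ γ, fderiv ℝ (fun q' => fderiv ℝ (φ γ) q' (e i')) q (e j') * A q γ β)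
          + (∑ γ, (A q)⁻¹ i' γ * fderiv ℝ (fun q' => A q' γ β) q (e j')) = 0 := by
      -- redo hkey with general indices: inline the same proof
      intro β
      have hconst : (fun q' => ∑ γ, fderiv ℝ (φ γ) q' (e i') * A q' γ β)
          =ᶠ[nhds q] (fun _ => if i' = β then (1:ℝ) else 0) := by
        filter_upwards [hmem] with q' hq'
        have h1 : ∀ γ, fderiv ℝ (φ γ) q' (e i') = (A q')⁻¹ i' γ :=
          fun γ => (hgrad q' hq' i' γ).symm
        simp only [h1]
        calc ∑ γ, (A q')⁻¹ i' γ * A q' γ β = ((A q')⁻¹ * A q') i' β := by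
              simp [Matrix.mul_apply]
          _ = (1 : Matrix (Fin d) (Fin d) ℝ) i' β := by
              rw [Matrix.nonsing_inv_mul _ ((Matrix.isUnit_iff_isUnit_det _).mp (hAinv q' hq'))]
          _ = if i' = β then 1 else 0 := Matrix.one_apply
      have h0 : fderiv ℝ (fun q' => ∑ γ, fderiv ℝ (φ γ) q' (e i') * A q' γ β) q = 0 := by
        rw [hconst.fderiv_eq]; exact fderiv_const_apply _
      have hexp : fderiv ℝ (fun q' => ∑ γ, fderiv ℝ (φ γ) q' (e i') * A q' γ β) q (e j')
          = ∑ γ, (fderiv ℝ (fun q' => fderiv ℝ (φ γ) q' (e i')) q (e j') * A q γ β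
              + (A q)⁻¹ i' γ * fderiv ℝ (fun q' => A q' γ β) q (e j')) := by
        rw [fderiv_fun_sum (fun γ _ => (hψdiff q hq γ i').fun_mul (hAdiff q hq γ β))]
        rw [ContinuousLinearMap.sum_apply]
        refine Finset.sum_congr rfl fun γ _ => ?_
        rw [fderiv_fun_mul (hψdiff q hq γ i') (hAdiff q hq γ β)]
        have h1 : fderiv ℝ (φ γ) q (e i') = (A q)⁻¹ i' γ := (hgrad q hq i' γ).symm
        simp [h1, smul_eq_mul]
        ring
      rw [← Finset.sum_add_distrib, ← hexp, h0]
      simp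
    calc (∑ α, (A q)⁻¹ i' α * fderiv ℝ (fun q' => (A q' *ᵥ p) α) q (e j'))
        = ∑ α, (A q)⁻¹ i' α * ∑ β, fderiv ℝ (fun q' => A q' α β) q (e j') * p β := by
          refine Finset.sum_congr rfl fun α _ => ?_
          rw [hv α (e j')]
      _ = ∑ β, (∑ α, (A q)⁻¹ i' α * fderiv ℝ (fun q' => A q' α β) q (e j')) * p β := by
          simp only [Finset.mul_sum, Finset.sum_mul]
          rw [Finset.sum_comm]
          exact Finset.sum_congr rfl fun β _ => Finset.sum_congr rfl fun α _ =>
            (mul_assoc _ _ _).symm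
      _ = ∑ β, (-(∑ γ, fderiv ℝ (fun q' => fderiv ℝ (φ γ) q' (e i')) q (e j') * A q γ β)) * p β := by
          refine Finset.sum_congr rfl fun β _ => ?_
          have := hkey' β
          have h2 : (∑ γ, (A q)⁻¹ i' γ * fderiv ℝ (fun q' => A q' γ β) q (e j'))
              = -(∑ γ, fderiv ℝ (fun q' => fderiv ℝ (φ γ) q' (e i')) q (e j') * A q γ β) := by
            linarith
          rw [h2]
      _ = -(∑ γ, fderiv ℝ (fun q' => fderiv ℝ (φ γ) q' (e i')) q (e j') * (A q *ᵥ p) γ) := by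
          have hmv : ∀ γ, (A q *ᵥ p) γ = ∑ β, A q γ β * p β := fun γ => by
            simp [Matrix.mulVec, dotProduct]
          simp only [hmv, neg_mul, Finset.sum_mul, Finset.mul_sum, Finset.sum_neg_distrib]
          congr 1
          rw [Finset.sum_comm]
          exact Finset.sum_congr rfl fun γ _ => Finset.sum_congr rfl fun β _ => mul_assoc _ _ _
  refine ⟨main i j, ?_⟩
  rw [main i j, main j i]
  refine congrArg Neg.neg (Finset.sum_congr rfl fun γ _ => ?_)
  rw [hsymm γ (e i) (e j)]
end

section
/- Let $m, \sigma: \mathbb{R} \to \mathbb{R}$ be smooth with $\varepsilon \le m, \sigma \le \varepsilon^{-1}$ for some $\varepsilon > 0$, let $w: \mathbb{R} \to \mathbb{R}$ be smooth, and let $q: \mathbb{R} \to \mathbb{R}$ be the inverse of $x(q) = \int_0^q \sqrt{m(t)}\,dt$, so that $q'(x) = 1/\sqrt{m(q(x))}$ and $q''(x) = -\frac{m'(q(x))}{2m(q(x))^2}$. Define the drift $b(z) = -\frac{w'\sqrt{m}}{\sigma}(q(z)) - \frac{m'}{2\beta\sigma\sqrt{m}}(q(z)) + \frac{1}{\beta}\left[\frac{m'}{\sqrt{m}\,\sigma}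 - \frac{\sigma'\sqrt{m}}{\sigma^2}\right](q(z))$ and diffusion coefficient squared $a(z) = \frac{2m}{\beta\sigma}(q(z))$. Then $q'(z)\,b(z) + \frac{1}{2}a(z)\,q''(z) = -\left[\frac{w'}{\sigma} + \frac{1}{\beta}\frac{\sigma'}{\sigma^2}\right](q(z))$, independently of $m$. -/
open Real

/-- The 1D overdamped limit of variable-mass Langevin dynamics transported back to the
original coordinate: `q'(z) b(z) + ½ a(z) q''(z) = -[w'/σ + β⁻¹ σ'/σ²](q(z))`,
independently of the mass profile `m`. -/
theorem one_dimensional_drift_computation (β ε : ℝ) (hβ : 0 < β) (hε : 0 < ε)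
    (m σ w : ℝ → ℝ)
    (hm : ContDiff ℝ (⊤ : ℕ∞) m) (hσ : ContDiff ℝ (⊤ : ℕ∞) σ) (hw : ContDiff ℝ (⊤ : ℕ∞) w)
    (hmlb : ∀ x, ε ≤ m x) (hmub : ∀ x, m x ≤ ε⁻¹)
    (hσlb : ∀ x, ε ≤ σ x) (hσub : ∀ x, σ x ≤ ε⁻¹)
    (q : ℝ → ℝ)
    (hq' : ∀ z, deriv q z = 1 / Real.sqrt (m (q z)))
    (hq'' : ∀ z, deriv (deriv q) z = -(deriv m (q z)) / (2 * (m (q z)) ^ 2))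
    (b a : ℝ → ℝ)
    (hb : ∀ z, b z = -(deriv w (q z) * Real.sqrt (m (q z)) / σ (q z))
        - deriv m (q z) / (2 * β * σ (q z) * Real.sqrt (m (q z)))
        + (1 / β) * (deriv m (q z) / (Real.sqrt (m (q z)) * σ (q z))
            - deriv σ (q z) * Real.sqrt (m (q z)) / (σ (q z)) ^ 2))
    (ha : ∀ z, a z = 2 * m (q z) / (β * σ (q z))) :
    ∀ z, deriv q z * b z + (1 / 2) * a z * deriv (deriv q) z
      = -(deriv w (q z) / σ (q z) + (1 / β) * deriv σ (q z) / (σ (q z)) ^ 2) := by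
  intro z
  have hM : 0 < m (q z) := lt_of_lt_of_le hε (hmlb _)
  have hS : 0 < σ (q z) := lt_of_lt_of_le hε (hσlb _)
  have hs : 0 < Real.sqrt (m (q z)) := Real.sqrt_pos.mpr hM
  have hsq : Real.sqrt (m (q z)) ^ 2 = m (q z) := Real.sq_sqrt hM.le
  rw [hq', hq'', hb, ha]
  set s := Real.sqrt (m (q z)) with hsdef
  rw [show m (q z) = s ^ 2 from hsq.symm]
  field_simp
  ring
end
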